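/- arXiv:1310.1253 — 2 statements merged into one kernel-verified Lean document; each statement's English description precedes it below -/
import Mathlib

section
/- Let n be a positive integer, m an integer with gcd(m,n) = 1, and m* an integer with m·m* ≡ 1 (mod n). Then S(m,n) - (m + m*)/n is an integer, where S(m,n) = 12·s(m,n) is twelve times the classical Dedekind sum. -/
noncomputable def saw (x : ℚ) : ℚ := if x.den = 1 then 0 else x - ⌊x⌋ - 1/2

noncomputable def dedekindSum (m n : ℤ) : ℚ :=
  ∑ k ∈ Finset.Icc (1:ℤ) n, saw ((k : ℚ) / (n : ℚ)) * saw ((m : ℚ) * (k : ℚ) / (n : ℚ))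

noncomputable def S (m n : ℤ) : ℚ := 12 * dedekindSum m n

/-!
Write `r k = m k % n`, `q k = m k / n` and `T = ∑_{0 ≤ k < n} k r k`. Off the multiples of `n`,
`saw (k / n) = (k % n) / n - 1/2`, which turns the Dedekind sum into `4 n² s(m,n) = 4 T - n² (n - 1)`;
so the claim is `12 T ≡ n (m + m*) [ZMOD n²]`. Since `k ↦ r k` permutes `[0, n)`, we have
`∑ r k ² = ∑ k ²`; expanding `r k = m k - n q k` there gives `12 m ∑ k q k ≡ m² - 1 [ZMOD n]`, hence
`12 ∑ k q k ≡ m - m* [ZMOD n]` after multiplying by `m*`. Finally `T = m ∑ k² - n ∑ k q k` and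
`6 ∑ k² = n (n - 1) (2 n - 1)`.
-/

open Finset

lemma two_mul_sum_Ico_zero_id {n : ℤ} (hn : 0 ≤ n) : 2 * ∑ k ∈ Ico 0 n, k = n * (n - 1) := by
  induction n, hn using Int.leInduction with
  | base => simp
  | succ n hn ih => rw [← sum_Ico_add_eq_sum_Ico_add_one hn]; linear_combination ih

lemma six_mul_sum_Ico_zero_sq {n : ℤ} (hn : 0 ≤ n) :
    6 * ∑ k ∈ Ico 0 n, k ^ 2 = n * (n - 1) * (2 * n - 1) := by
  induction n, hn using Int.leInduction with
  | base => simp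
  | succ n hn ih => rw [← sum_Ico_add_eq_sum_Ico_add_one hn]; linear_combination ih

lemma saw_intCast (a : ℤ) : saw a = 0 := by
  simp [saw]

lemma saw_intCast_div {a n : ℤ} (hn : 0 < n) (ha : ¬ n ∣ a) :
    saw (a / n) = ((a % n : ℤ) : ℚ) / n - 1 / 2 := by
  lift n to ℕ using hn.le
  have hfract : Int.fract ((a : ℚ) / n) = ((a % n : ℤ) : ℚ) / n :=
    Int.fract_div_intCast_eq_div_intCast_mod
  have hden : ((a : ℚ) / n).den ≠ 1 := by
    intro h
    rw [← (Rat.den_eq_one_iff _).1 h, Int.fract_intCast, eq_comm, div_eq_zero_iff] at hfract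
    norm_cast at hfract
    exact ha (Int.dvd_of_emod_eq_zero (hfract.resolve_right (by omega)))
  rw [Int.cast_natCast, saw, if_neg hden, Int.self_sub_floor, hfract]

section

variable {n m m' : ℤ}

lemma mul_emod_mul_emod_of_modEq_one (hinv : m * m' ≡ 1 [ZMOD n]) {k : ℤ} (hk : k ∈ Ico 0 n) :
    m' * (m * k % n) % n = k := by
  rw [mem_Ico] at hk
  have : m' * (m * k % n) ≡ k [ZMOD n] := calc
    m' * (m * k % n) ≡ m' * (m * k) [ZMOD n] := (Int.mod_modEq _ n).mul_left _
    _ = (m * m') * k := by ring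
    _ ≡ 1 * k [ZMOD n] := hinv.mul_right k
    _ = k := one_mul k
  rw [this, Int.emod_eq_of_lt hk.1 hk.2]

lemma emod_mem_Ico_zero (hn : 0 < n) (a : ℤ) : a % n ∈ Ico 0 n :=
  mem_Ico.2 ⟨Int.emod_nonneg a hn.ne', Int.emod_lt_of_pos a hn⟩

lemma sum_Ico_zero_comp_mul_emod {M : Type*} [AddCommMonoid M] (hn : 0 < n)
    (hinv : m * m' ≡ 1 [ZMOD n]) (f : ℤ → M) :
    ∑ k ∈ Ico 0 n, f (m * k % n) = ∑ k ∈ Ico 0 n, f k :=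
  sum_bij' (fun k _ => m * k % n) (fun k _ => m' * k % n)
    (fun k _ => emod_mem_Ico_zero hn _) (fun k _ => emod_mem_Ico_zero hn _)
    (fun _ hk => mul_emod_mul_emod_of_modEq_one hinv hk)
    (fun _ hk => mul_emod_mul_emod_of_modEq_one (by rwa [mul_comm]) hk) (fun _ _ => rfl)

lemma twelve_mul_mul_sum_mul_ediv (hn : 0 < n) (hinv : m * m' ≡ 1 [ZMOD n]) :
    12 * m * ∑ k ∈ Ico 0 n, k * (m * k / n)
      = (n - 1) * (2 * n - 1) * (m ^ 2 - 1) + n * (6 * ∑ k ∈ Ico 0 n, (m * k / n) ^ 2) := by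
  have hperm := sum_Ico_zero_comp_mul_emod hn hinv (· ^ 2)
  have hexpand : ∑ k ∈ Ico 0 n, (m * k % n) ^ 2 = m ^ 2 * ∑ k ∈ Ico 0 n, k ^ 2
      - 2 * m * n * ∑ k ∈ Ico 0 n, k * (m * k / n) + n ^ 2 * ∑ k ∈ Ico 0 n, (m * k / n) ^ 2 := by
    simp only [mul_sum, ← sum_sub_distrib, ← sum_add_distrib]
    refine sum_congr rfl fun k _ => ?_
    rw [Int.emod_def]; ring
  apply mul_left_cancel₀ hn.ne'
  linear_combination 6 * hexpand - 6 * hperm + (m ^ 2 - 1) * six_mul_sum_Ico_zero_sq hn.le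

lemma twelve_mul_sum_mul_ediv_modEq (hn : 0 < n) (hinv : m * m' ≡ 1 [ZMOD n]) :
    12 * ∑ k ∈ Ico 0 n, k * (m * k / n) ≡ m - m' [ZMOD n] := by
  set U := ∑ k ∈ Ico 0 n, k * (m * k / n)
  set Q := ∑ k ∈ Ico 0 n, (m * k / n) ^ 2
  have hn0 : n ≡ 0 [ZMOD n] := Int.modEq_zero_iff_dvd.2 dvd_rfl
  calc 12 * U = 1 * (12 * U) := (one_mul _).symm
    _ ≡ (m * m') * (12 * U) [ZMOD n] := hinv.symm.mul_right _
    _ = m' * ((n - 1) * (2 * n - 1) * (m ^ 2 - 1) + n * (6 * Q)) := by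
      rw [← twelve_mul_mul_sum_mul_ediv hn hinv]; ring
    _ ≡ m' * ((0 - 1) * (2 * 0 - 1) * (m ^ 2 - 1) + 0 * (6 * Q)) [ZMOD n] := by gcongr
    _ = (m * m') * m - m' := by ring
    _ ≡ 1 * m - m' [ZMOD n] := by gcongr
    _ = m - m' := by ring

lemma twelve_mul_sum_mul_emod_modEq (hn : 0 < n) (hinv : m * m' ≡ 1 [ZMOD n]) :
    12 * ∑ k ∈ Ico 0 n, k * (m * k % n) ≡ n * (m + m') [ZMOD n ^ 2] := by
  set U := ∑ k ∈ Ico 0 n, k * (m * k / n)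
  have hn0 : n ≡ 0 [ZMOD n] := Int.modEq_zero_iff_dvd.2 dvd_rfl
  have hsplit : ∑ k ∈ Ico 0 n, k * (m * k % n) = m * ∑ k ∈ Ico 0 n, k ^ 2 - n * U := by
    simp only [U, mul_sum, ← sum_sub_distrib]
    refine sum_congr rfl fun k _ => ?_
    rw [Int.emod_def]; ring
  have hquot : 2 * m * ((n - 1) * (2 * n - 1)) - 12 * U ≡ m + m' [ZMOD n] := calc
    _ ≡ 2 * m * ((0 - 1) * (2 * 0 - 1)) - (m - m') [ZMOD n] := by
      gcongr
      exact twelve_mul_sum_mul_ediv_modEq hn hinv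
    _ = m + m' := by ring
  rw [sq]
  calc _ = n * (2 * m * ((n - 1) * (2 * n - 1)) - 12 * U) := by
        linear_combination 12 * hsplit + 2 * m * six_mul_sum_Ico_zero_sq hn.le
    _ ≡ n * (m + m') [ZMOD n * n] := hquot.mul_left'

-- The `k = n` term of `dedekindSum` vanishes; the added `k = 0` term is `1/4`.
lemma dedekindSum_eq_sum_Ico_zero (hn : 0 < n) (hmn : IsCoprime m n) :
    dedekindSum m n
      = ∑ k ∈ Ico 0 n, ((k : ℚ) / n - 1 / 2) * (((m * k % n : ℤ) : ℚ) / n - 1 / 2) - 1 / 4 := by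
  have hn' : (n : ℚ) ≠ 0 := by positivity
  have htop : saw ((n : ℚ) / n) = 0 := by rw [div_self hn', ← Int.cast_one, saw_intCast]
  rw [dedekindSum, ← sum_Ico_add_eq_sum_Icc hn, htop, zero_mul, add_zero,
    ← insert_Ico_add_one_left_eq_Ico hn, sum_insert (by simp)]
  simp only [Int.cast_zero, zero_div, mul_zero, Int.zero_emod, zero_add]
  rw [sum_congr rfl fun k hk => ?_]
  · ring
  rw [mem_Ico] at hk
  have hnk : ¬ n ∣ k := fun h => by have := Int.le_of_dvd (by omega) h; omega
  have hmk : ¬ n ∣ m * k := fun h => hnk (hmn.symm.dvd_of_dvd_mul_left h)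
  rw [saw_intCast_div hn hnk, ← Int.cast_mul, saw_intCast_div hn hmk,
    Int.emod_eq_of_lt (by omega) (by omega)]

lemma sum_Ico_zero_two_mul_sub_mul (hn : 0 < n) (hinv : m * m' ≡ 1 [ZMOD n]) :
    ∑ k ∈ Ico 0 n, (2 * k - n) * (2 * (m * k % n) - n)
      = 4 * ∑ k ∈ Ico 0 n, k * (m * k % n) - n ^ 2 * (n - 2) := by
  have hperm : ∑ k ∈ Ico 0 n, m * k % n = ∑ k ∈ Ico 0 n, k :=
    sum_Ico_zero_comp_mul_emod hn hinv id
  have hexpand : ∑ k ∈ Ico 0 n, (2 * k - n) * (2 * (m * k % n) - n)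
      = 4 * ∑ k ∈ Ico 0 n, k * (m * k % n) - 2 * n * ∑ k ∈ Ico 0 n, k
        - 2 * n * ∑ k ∈ Ico 0 n, (m * k % n) + n * n ^ 2 := by
    have hconst : ∑ _k ∈ Ico 0 n, n ^ 2 = n * n ^ 2 := by simp [hn.le]
    rw [← hconst]
    simp only [mul_sum, ← sum_sub_distrib, ← sum_add_distrib]
    exact sum_congr rfl fun k _ => by ring
  linear_combination hexpand - 2 * n * hperm - 2 * n * two_mul_sum_Ico_zero_id hn.le

lemma four_mul_sq_mul_dedekindSum (hn : 0 < n) (hmn : IsCoprime m n)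
    (hinv : m * m' ≡ 1 [ZMOD n]) :
    4 * n ^ 2 * dedekindSum m n
      = 4 * ((∑ k ∈ Ico 0 n, k * (m * k % n) : ℤ) : ℚ) - n ^ 2 * (n - 1) := by
  have hn' : (n : ℚ) ≠ 0 := by positivity
  have hB : 4 * n ^ 2 * ∑ k ∈ Ico 0 n, ((k : ℚ) / n - 1 / 2) * (((m * k % n : ℤ) : ℚ) / n - 1 / 2)
      = ((∑ k ∈ Ico 0 n, (2 * k - n) * (2 * (m * k % n) - n) : ℤ) : ℚ) := by
    push_cast
    rw [mul_sum]
    exact sum_congr rfl fun k _ => by field_simp; ring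
  rw [dedekindSum_eq_sum_Ico_zero hn hmn, mul_sub, hB, sum_Ico_zero_two_mul_sub_mul hn hinv]
  push_cast
  ring

end

theorem stmt3 (n : ℤ) (hn : 0 < n) (m mstar : ℤ) (h : Int.gcd m n = 1)
    (hinv : m * mstar ≡ 1 [ZMOD n]) :
    ∃ z : ℤ, S m n - ((m : ℚ) + (mstar : ℚ)) / (n : ℚ) = z := by
  obtain ⟨t, ht⟩ := (twelve_mul_sum_mul_emod_modEq hn hinv).dvd
  have hs := four_mul_sq_mul_dedekindSum hn (Int.isCoprime_iff_gcd_eq_one.2 h) hinv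
  have htQ := congrArg (Int.cast : ℤ → ℚ) ht
  push_cast at htQ hs
  refine ⟨-t - 3 * (n - 1), ?_⟩
  have hn' : (n : ℚ) ≠ 0 := by positivity
  rw [S]
  field_simp
  apply mul_left_cancel₀ hn'
  push_cast
  linear_combination 3 * hs - htQ
end

section
/- Let n be an even positive integer and q an odd integer with q ≡ 1 (mod 4) and gcd(q,n) = 1. Let p be a prime with p ≡ 1 (mod 4) and q·p ≡ 1 (mod n). Suppose m is an integer with m ≡ 1 (mod 2n) and m² ≡ -1 (mod p), and m* is an integer with m·m* ≡ 1 (mod 2·n·p). Then (m + m*)/(2·n·p) - q/n ∈ ℤ. -/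
/-!
Modulo `2n` both `m` and its inverse `m*` are `≡ 1`, so `m + m* ≡ 2 ≡ 2pq`. Modulo `p`, `m` is
invertible and `m (m + m*) = m² + m m* ≡ -1 + 1 = 0`, so `p ∣ m + m*`, i.e. `m + m* ≡ 2pq` again.
As `p` is odd and prime to `n`, these combine to `2np ∣ m + m* - 2pq`, which is the claim.
-/

namespace Int

theorem ModEq.modEq_one_of_mul_modEq_one {k a b : ℤ} (ha : a ≡ 1 [ZMOD k])
    (hab : a * b ≡ 1 [ZMOD k]) : b ≡ 1 [ZMOD k] :=
  calc b = 1 * b := (one_mul b).symm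
    _ ≡ a * b [ZMOD k] := ha.symm.mul_right b
    _ ≡ 1 [ZMOD k] := hab

theorem dvd_add_of_sq_modEq_neg_one_of_mul_modEq_one {k m m' : ℤ} (hm : m ^ 2 ≡ -1 [ZMOD k])
    (hmm' : m * m' ≡ 1 [ZMOD k]) : k ∣ m + m' := by
  refine (modEq_zero_iff_dvd).mp ?_
  calc m + m' = 1 * (m + m') := (one_mul _).symm
    _ ≡ m * m' * (m + m') [ZMOD k] := hmm'.symm.mul_right _
    _ = m' * (m ^ 2 + m * m') := by ring
    _ ≡ m' * (-1 + 1) [ZMOD k] := (hm.add hmm').mul_left m'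
    _ = 0 := by ring

theorem isCoprime_of_mul_modEq_one {k a b : ℤ} (h : a * b ≡ 1 [ZMOD k]) : IsCoprime b k := by
  obtain ⟨c, hc⟩ := h.dvd
  exact ⟨a, c, by linarith⟩

end Int

open Int in
theorem two_mul_mul_dvd_add_inv_sub {n q p m mstar : ℤ} (hp : Odd p) (hqp : q * p ≡ 1 [ZMOD n])
    (hm : m ≡ 1 [ZMOD (2 * n)]) (hm2 : m ^ 2 ≡ -1 [ZMOD p])
    (hinv : m * mstar ≡ 1 [ZMOD (2 * n * p)]) : 2 * n * p ∣ m + mstar - 2 * p * q := by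
  have hcop : IsCoprime (2 * n) p :=
    (isCoprime_two_left.mpr hp).mul_left (isCoprime_of_mul_modEq_one hqp).symm
  have hmstar : mstar ≡ 1 [ZMOD 2 * n] := hm.modEq_one_of_mul_modEq_one (hinv.of_mul_right p)
  have hmod2n : m + mstar ≡ 2 * p * q [ZMOD 2 * n] :=
    calc m + mstar ≡ 1 + 1 [ZMOD 2 * n] := hm.add hmstar
      _ = 2 * 1 := by ring
      _ ≡ 2 * (q * p) [ZMOD 2 * n] := (hqp.mul_left' (c := 2)).symm
      _ = 2 * p * q := by ring
  have hmodp : p ∣ m + mstar - 2 * p * q :=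
    dvd_sub (dvd_add_of_sq_modEq_neg_one_of_mul_modEq_one hm2 (hinv.of_mul_left (2 * n)))
      ⟨2 * q, by ring⟩
  exact hcop.mul_dvd hmod2n.symm.dvd hmodp

theorem stmt6_general (n q p m mstar : ℤ) (hn : 0 < n) (hp : Prime p) (hp4 : p ≡ 1 [ZMOD 4])
    (hqp : q * p ≡ 1 [ZMOD n]) (hm : m ≡ 1 [ZMOD (2 * n)]) (hm2 : m ^ 2 ≡ -1 [ZMOD p])
    (hinv : m * mstar ≡ 1 [ZMOD (2 * n * p)]) :
    ∃ z : ℤ, ((m : ℚ) + (mstar : ℚ)) / (2 * (n : ℚ) * (p : ℚ)) - (q : ℚ) / (n : ℚ) = z := by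
  have hpodd : Odd p := Int.odd_iff.mpr (hp4.of_dvd (by norm_num : (2 : ℤ) ∣ 4))
  obtain ⟨k, hk⟩ := two_mul_mul_dvd_add_inv_sub hpodd hqp hm hm2 hinv
  refine ⟨k, ?_⟩
  have hn0 : (n : ℚ) ≠ 0 := Int.cast_ne_zero.mpr hn.ne'
  have hp0 : (p : ℚ) ≠ 0 := Int.cast_ne_zero.mpr hp.ne_zero
  have hkq : (m : ℚ) + mstar - 2 * p * q = 2 * n * p * k := mod_cast hk
  field_simp
  linear_combination hkq

theorem stmt6 (n q p m mstar : ℤ) (hn : 0 < n) (heven : Even n) (hqodd : Odd q)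
    (hq4 : q ≡ 1 [ZMOD 4]) (hgcd : Int.gcd q n = 1) (hp : Prime p) (hp4 : p ≡ 1 [ZMOD 4])
    (hqp : q * p ≡ 1 [ZMOD n]) (hm : m ≡ 1 [ZMOD (2 * n)]) (hm2 : m ^ 2 ≡ -1 [ZMOD p])
    (hinv : m * mstar ≡ 1 [ZMOD (2 * n * p)]) :
    ∃ z : ℤ, ((m : ℚ) + (mstar : ℚ)) / (2 * (n : ℚ) * (p : ℚ)) - (q : ℚ) / (n : ℚ) = z :=
  stmt6_general n q p m mstar hn hp hp4 hqp hm hm2 hinv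
end
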